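/- For every real δ₁ > 0, each of the two functions f₁₁(s) = ( (δ₁+1) s^{δ₁} + (δ₁−1) s^{δ₁+2} ) / (1 + s²) and f₁₂(s) = ( (δ₁+1) s^{2−δ₁} + (δ₁−1) s^{−δ₁} ) / (1 + s²) is a solution of the ordinary differential equation f''(s) + f'(s)/s + ( 8/(1+s²)² − δ₁²/s² ) f(s) = 0 for all s ∈ (0, ∞). -/

import Mathlib

open Real Filter MeasureTheory

noncomputable section

/-- `f₁₁(s) = ((δ₁+1) s^{δ₁} + (δ₁-1) s^{δ₁+2})/(1+s²)`. -/
def f11 (δ₁ s : ℝ) : ℝ := ((δ₁ + 1) * s ^ δ₁ + (δ₁ - 1) * s ^ (δ₁ + 2)) / (1 + s ^ 2)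

/-- `f₁₂(s) = ((δ₁+1) s^{2-δ₁} + (δ₁-1) s^{-δ₁})/(1+s²)`. -/
def f12 (δ₁ s : ℝ) : ℝ := ((δ₁ + 1) * s ^ (2 - δ₁) + (δ₁ - 1) * s ^ (-δ₁)) / (1 + s ^ 2)

/-!
Conjugating by `s ^ δ` turns the Euler part `f'' + f'/s - δ²/s² f` of the operator into
`s ^ δ (g'' + (2δ + 1) g'/s)` for `f = s ^ δ g`. For `g = a + b/(1+s²)` the whole equation then
reduces to the single linear relation `2a = (δ - 1) b`, and on `(0, ∞)` we have
`f₁₁ = s ^ δ (δ - 1 + 2/(1+s²))` and `f₁₂ = s ^ (-δ) (δ + 1 - 2/(1+s²))`, which satisfy it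
with exponents `δ` and `-δ`.
-/

open Topology

theorem radial_operator_rpow_mul {δ s g'' : ℝ} {f g g' : ℝ → ℝ} (hs : 0 < s)
    (hf : ∀ t > 0, f t = t ^ δ * g t) (hg : ∀ t > 0, HasDerivAt g (g' t) t)
    (hg' : HasDerivAt g' g'' s) :
    deriv (deriv f) s + deriv f s / s - δ ^ 2 / s ^ 2 * f s
      = s ^ δ * (g'' + (2 * δ + 1) * g' s / s) := by
  have hf' : ∀ t > 0, HasDerivAt f (δ * t ^ (δ - 1) * g t + t ^ δ * g' t) t := fun t ht =>
    ((hasDerivAt_rpow_const (Or.inl ht.ne')).mul (hg t ht)).congr_of_eventuallyEq <|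
      eventually_of_mem (Ioi_mem_nhds ht) hf
  have hf'' : HasDerivAt (fun t => δ * t ^ (δ - 1) * g t + t ^ δ * g' t)
      (δ * ((δ - 1) * s ^ (δ - 1 - 1)) * g s + δ * s ^ (δ - 1) * g' s
        + (δ * s ^ (δ - 1) * g' s + s ^ δ * g'')) s :=
    ((((hasDerivAt_rpow_const (Or.inl hs.ne')).const_mul δ).mul (hg s hs)).add
      ((hasDerivAt_rpow_const (Or.inl hs.ne')).mul hg')).congr_deriv (by ring)
  have hderiv : deriv f =ᶠ[𝓝 s] fun t => δ * t ^ (δ - 1) * g t + t ^ δ * g' t :=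
    eventually_of_mem (Ioi_mem_nhds hs) fun t ht => (hf' t ht).deriv
  have h1 : s ^ (δ - 1) = s ^ δ / s := by rw [rpow_sub hs, rpow_one]
  have h2 : s ^ (δ - 1 - 1) = s ^ δ / s ^ 2 := by rw [rpow_sub hs, rpow_one, h1]; ring
  rw [hderiv.deriv_eq, hf''.deriv, (hf' s hs).deriv, hf s hs, h1, h2]
  field_simp
  ring

theorem hasDerivAt_const_add_div_one_add_sq (a b t : ℝ) :
    HasDerivAt (fun t => a + b / (1 + t ^ 2)) (-2 * b * t / (1 + t ^ 2) ^ 2) t := by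
  refine (((hasDerivAt_const t b).div ((hasDerivAt_pow 2 t).const_add 1)
    (by positivity)).const_add a).congr_deriv ?_
  ring

theorem hasDerivAt_mul_div_one_add_sq_sq (c t : ℝ) :
    HasDerivAt (fun t => c * t / (1 + t ^ 2) ^ 2) (c * (1 - 3 * t ^ 2) / (1 + t ^ 2) ^ 3) t := by
  refine (((hasDerivAt_id' t).const_mul c).div (((hasDerivAt_pow 2 t).const_add 1).fun_pow 2)
    (by positivity)).congr_deriv ?_
  field_simp
  ring

theorem conjugated_radial_ode_const_add_div {δ a b s : ℝ} (hab : 2 * a = (δ - 1) * b)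
    (hs : s ≠ 0) :
    -2 * b * (1 - 3 * s ^ 2) / (1 + s ^ 2) ^ 3 + (2 * δ + 1) * (-2 * b * s / (1 + s ^ 2) ^ 2) / s
      + 8 / (1 + s ^ 2) ^ 2 * (a + b / (1 + s ^ 2)) = 0 := by
  field_simp
  linear_combination 4 * (1 + s ^ 2) * hab

theorem radial_ode_rpow_mul_const_add_div {δ a b s : ℝ} {f : ℝ → ℝ} (hab : 2 * a = (δ - 1) * b)
    (hf : ∀ t > 0, f t = t ^ δ * (a + b / (1 + t ^ 2))) (hs : 0 < s) :
    deriv (deriv f) s + deriv f s / s + (8 / (1 + s ^ 2) ^ 2 - δ ^ 2 / s ^ 2) * f s = 0 := by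
  have h := radial_operator_rpow_mul hs hf
    (g' := fun t => -2 * b * t / (1 + t ^ 2) ^ 2)
    (fun t _ => hasDerivAt_const_add_div_one_add_sq a b t)
    (hasDerivAt_mul_div_one_add_sq_sq (-2 * b) s)
  rw [hf s hs] at h ⊢
  linear_combination h + s ^ δ * conjugated_radial_ode_const_add_div hab hs.ne'

theorem f11_eq_rpow_mul (δ : ℝ) {t : ℝ} (ht : 0 < t) :
    f11 δ t = t ^ δ * (δ - 1 + 2 / (1 + t ^ 2)) := by
  rw [f11, rpow_add ht, rpow_two]
  field_simp
  ring

theorem f12_eq_rpow_mul (δ : ℝ) {t : ℝ} (ht : 0 < t) :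
    f12 δ t = t ^ (-δ) * (δ + 1 + -2 / (1 + t ^ 2)) := by
  rw [f12, sub_eq_add_neg, rpow_add ht, rpow_two]
  field_simp
  ring

theorem fundamental_solutions_general (δ₁ : ℝ) :
    (∀ s > (0 : ℝ), deriv (deriv (f11 δ₁)) s + deriv (f11 δ₁) s / s
        + (8 / (1 + s ^ 2) ^ 2 - δ₁ ^ 2 / s ^ 2) * f11 δ₁ s = 0)
    ∧ (∀ s > (0 : ℝ), deriv (deriv (f12 δ₁)) s + deriv (f12 δ₁) s / s
        + (8 / (1 + s ^ 2) ^ 2 - δ₁ ^ 2 / s ^ 2) * f12 δ₁ s = 0) := by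
  refine ⟨fun s hs => ?_, fun s hs => ?_⟩
  · exact radial_ode_rpow_mul_const_add_div (by ring) (fun t => f11_eq_rpow_mul δ₁) hs
  · simpa only [neg_sq] using
      radial_ode_rpow_mul_const_add_div (by ring) (fun t => f12_eq_rpow_mul δ₁) hs

/-- Equation (2.3): `f₁₁` and `f₁₂` are fundamental solutions of the linearized
radial ODE. -/
theorem fundamental_solutions (δ₁ : ℝ) (hδ₁ : 0 < δ₁) :
    (∀ s > (0 : ℝ), deriv (deriv (f11 δ₁)) s + deriv (f11 δ₁) s / s
        + (8 / (1 + s ^ 2) ^ 2 - δ₁ ^ 2 / s ^ 2) * f11 δ₁ s = 0)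
    ∧ (∀ s > (0 : ℝ), deriv (deriv (f12 δ₁)) s + deriv (f12 δ₁) s / s
        + (8 / (1 + s ^ 2) ^ 2 - δ₁ ^ 2 / s ^ 2) * f12 δ₁ s = 0) :=
  fundamental_solutions_general δ₁
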